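/- arXiv:2412.05268 — 2 statements merged into one kernel-verified Lean document; each statement's English description precedes it below -/
import Mathlib

section
/- Let n_M, n_N, k, d be natural numbers, match : Fin n_N → Fin n_M, and let Π ∈ ℝ^{n_N×n_M} be the binary matrix with Π_{j,i} = 1 if i = match(j) and 0 otherwise. Let Φ_M ∈ ℝ^{n_M×k}, Φ_N ∈ ℝ^{n_N×k}, A_M ∈ ℝ^{n_M×n_M}, A_N ∈ ℝ^{n_N×n_N}, C ∈ ℝ^{k×k}, f ∈ ℝ^{n_M×d}, g ∈ ℝ^{n_N×d}, D : Fin n_M → Fin n_N → ℝ, s ∈ ℝ with s > 0, and set F := Φ_Mᵀ·A_M·f, G := Φ_Nᵀ·A_N·g. Assume (i) ‖f_i − g_j‖₂ = s·D(i, j) for all rows i, j, (ii) Π = Φ_N·C·(Φ_Mᵀ·A_M), and (iii) g = Φ_N·G. Then the total semantic distance of the matching is bounded by the functional-map feature objective: s · √(Σ_j D(match(j), j)²) ≤ ‖Φ_N‖ · ‖C·F − G‖_F, where ‖·‖_F is the Frobenius norm and ‖Φ_N‖ the ℓ²→ℓ² operator norm. -/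
open Matrix

/-- The Frobenius norm of a real matrix. -/
noncomputable def frobNorm {m n : ℕ} (M : Matrix (Fin m) (Fin n) ℝ) : ℝ :=
  Real.sqrt (∑ i, ∑ j, (M i j) ^ 2)

/-- The ℓ²→ℓ² operator norm of a real matrix. -/
noncomputable def l2OpNorm {m n : ℕ} (M : Matrix (Fin m) (Fin n) ℝ) : ℝ :=
  ‖LinearMap.toContinuousLinearMap (Matrix.toEuclideanLin M)‖

/-!
The residual of the functional map, lifted back to the target mesh, is
`Φ_N (C F - G) = Π f - g`, whose `j`-th row is `f (match j) - g j`; by the feature hypothesis its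
Frobenius norm is exactly `s √(Σ_j D(match j, j)²)`. Applying `Φ_N` column by column, the Frobenius
norm of `Φ_N X` is at most `‖Φ_N‖ ‖X‖_F`.
-/

lemma l2OpNorm_nonneg {m n : ℕ} (M : Matrix (Fin m) (Fin n) ℝ) : 0 ≤ l2OpNorm M :=
  norm_nonneg _

lemma frobNorm_nonneg {m n : ℕ} (M : Matrix (Fin m) (Fin n) ℝ) : 0 ≤ frobNorm M :=
  Real.sqrt_nonneg _

lemma sq_frobNorm_eq_sum_sq_norm_columns {m n : ℕ} (M : Matrix (Fin m) (Fin n) ℝ) :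
    frobNorm M ^ 2 = ∑ j, ‖WithLp.toLp 2 (Mᵀ j)‖ ^ 2 := by
  rw [frobNorm, Real.sq_sqrt (by positivity), Finset.sum_comm]
  simp [EuclideanSpace.real_norm_sq_eq]

lemma frobNorm_eq_sqrt_sum_sq_of_row_norms {m n : ℕ} {M : Matrix (Fin m) (Fin n) ℝ}
    {r : Fin m → ℝ} (hr : ∀ i, Real.sqrt (∑ j, M i j ^ 2) = r i) :
    frobNorm M = Real.sqrt (∑ i, r i ^ 2) := by
  unfold frobNorm
  congr 1
  refine Finset.sum_congr rfl fun i _ => ?_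
  rw [← hr i, Real.sq_sqrt (by positivity)]

lemma norm_toLp_mulVec_le {m n : ℕ} (M : Matrix (Fin m) (Fin n) ℝ) (x : Fin n → ℝ) :
    ‖WithLp.toLp 2 (M *ᵥ x)‖ ≤ l2OpNorm M * ‖WithLp.toLp 2 x‖ :=
  (LinearMap.toContinuousLinearMap (toEuclideanLin M)).le_opNorm (WithLp.toLp 2 x)

lemma frobNorm_mul_le {m n d : ℕ} (M : Matrix (Fin m) (Fin n) ℝ) (X : Matrix (Fin n) (Fin d) ℝ) :
    frobNorm (M * X) ≤ l2OpNorm M * frobNorm X := by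
  rw [← pow_le_pow_iff_left₀ (frobNorm_nonneg _)
      (mul_nonneg (l2OpNorm_nonneg M) (frobNorm_nonneg X)) two_ne_zero,
    mul_pow, sq_frobNorm_eq_sum_sq_norm_columns, sq_frobNorm_eq_sum_sq_norm_columns,
    Finset.mul_sum]
  gcongr with p
  rw [← mul_pow]
  gcongr
  -- column `p` of `M * X` is `M *ᵥ Xᵀ p` by definitional unfolding
  exact norm_toLp_mulVec_le M (Xᵀ p)

lemma mul_eq_submatrix_of_apply_eq_ite {l m n α : Type*} [Fintype m] [DecidableEq m]
    [NonAssocSemiring α] {σ : l → m} {P : Matrix l m α}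
    (hP : ∀ j i, P j i = if i = σ j then 1 else 0) (M : Matrix m n α) :
    P * M = M.submatrix σ id := by
  ext j p
  simp [mul_apply, hP]

theorem semantic_distance_le_functional_map_objective_general (nM nN k d : ℕ)
    (mtch : Fin nN → Fin nM)
    (Pi : Matrix (Fin nN) (Fin nM) ℝ)
    (hPi : ∀ j i, Pi j i = if i = mtch j then 1 else 0)
    (ΦM : Matrix (Fin nM) (Fin k) ℝ) (ΦN : Matrix (Fin nN) (Fin k) ℝ)
    (AM : Matrix (Fin nM) (Fin nM) ℝ)
    (C : Matrix (Fin k) (Fin k) ℝ)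
    (f : Matrix (Fin nM) (Fin d) ℝ) (g : Matrix (Fin nN) (Fin d) ℝ)
    (D : Fin nM → Fin nN → ℝ) (s : ℝ) (hs : 0 < s)
    (F G : Matrix (Fin k) (Fin d) ℝ)
    (hF : F = ΦMᵀ * AM * f)
    (hdist : ∀ (i : Fin nM) (j : Fin nN),
      Real.sqrt (∑ p, (f i p - g j p) ^ 2) = s * D i j)
    (hrep : Pi = ΦN * C * (ΦMᵀ * AM))
    (hg : g = ΦN * G) :
    s * Real.sqrt (∑ j : Fin nN, (D (mtch j) j) ^ 2) ≤
      l2OpNorm ΦN * frobNorm (C * F - G) := by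
  have hresidual : ΦN * (C * F - G) = f.submatrix mtch id - g := by
    rw [Matrix.mul_sub, ← hg, hF, ← mul_eq_submatrix_of_apply_eq_ite hPi, hrep]
    simp only [Matrix.mul_assoc]
  have hfrob : frobNorm (f.submatrix mtch id - g) =
      Real.sqrt (∑ j, (s * D (mtch j) j) ^ 2) :=
    frobNorm_eq_sqrt_sum_sq_of_row_norms fun j => hdist (mtch j) j
  calc s * Real.sqrt (∑ j, D (mtch j) j ^ 2)
      = frobNorm (ΦN * (C * F - G)) := by
        rw [hresidual, hfrob]
        simp only [mul_pow, ← Finset.mul_sum]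
        rw [Real.sqrt_mul (sq_nonneg s), Real.sqrt_sq hs.le]
    _ ≤ l2OpNorm ΦN * frobNorm (C * F - G) := frobNorm_mul_le ΦN (C * F - G)

/-- The total semantic distance of a matching is bounded by the functional-map
feature objective: `s √(Σ_j D(match j, j)²) ≤ ‖Φ_N‖ ‖C F − G‖_F`. -/
theorem semantic_distance_le_functional_map_objective (nM nN k d : ℕ)
    (mtch : Fin nN → Fin nM)
    (Pi : Matrix (Fin nN) (Fin nM) ℝ)
    (hPi : ∀ j i, Pi j i = if i = mtch j then 1 else 0)
    (ΦM : Matrix (Fin nM) (Fin k) ℝ) (ΦN : Matrix (Fin nN) (Fin k) ℝ)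
    (AM : Matrix (Fin nM) (Fin nM) ℝ) (AN : Matrix (Fin nN) (Fin nN) ℝ)
    (C : Matrix (Fin k) (Fin k) ℝ)
    (f : Matrix (Fin nM) (Fin d) ℝ) (g : Matrix (Fin nN) (Fin d) ℝ)
    (D : Fin nM → Fin nN → ℝ) (s : ℝ) (hs : 0 < s)
    (F G : Matrix (Fin k) (Fin d) ℝ)
    (hF : F = ΦMᵀ * AM * f) (hG : G = ΦNᵀ * AN * g)
    (hdist : ∀ (i : Fin nM) (j : Fin nN),
      Real.sqrt (∑ p, (f i p - g j p) ^ 2) = s * D i j)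
    (hrep : Pi = ΦN * C * (ΦMᵀ * AM))
    (hg : g = ΦN * G) :
    s * Real.sqrt (∑ j : Fin nN, (D (mtch j) j) ^ 2) ≤
      l2OpNorm ΦN * frobNorm (C * F - G) :=
  semantic_distance_le_functional_map_objective_general nM nN k d mtch Pi hPi ΦM ΦN AM C f g D s hs
    F G hF hdist hrep hg
end

section
/- Let n_M, n_N, k be natural numbers; let A_M, W_M be n_M×n_M real matrices with A_M invertible, A_N, W_N be n_N×n_N real matrices with A_N invertible, Λ_M, Λ_N be k×k real diagonal matrices, and Φ_M ∈ ℝ^{n_M×k}, Φ_N ∈ ℝ^{n_N×k} satisfy W_M·Φ_M = A_M·Φ_M·Λ_M, W_N·Φ_N = A_N·Φ_N·Λ_N, Φ_Mᵀ·A_M·Φ_M = I_k, and Φ_Nᵀ·A_N·Φ_N = I_k. Let C ∈ ℝ^{k×k} and Π := Φ_N·C·(Φ_Mᵀ·A_M). Then Π commutes with the Laplace–Beltrami operators on the span of the source basis — i.e., Π·(A_M⁻¹·W_M·(Φ_M·X)) = A_N⁻¹·W_N·(Π·(Φ_M·X)) for all X ∈ ℝᵏ — if and only if C·Λ_M = Λ_N·C.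 -/
/-!
Write `L = A⁻¹ W` for the Laplacians. The eigen-equations say `L_M Φ_M = Φ_M Λ_M` and
`L_N Φ_N = Φ_N Λ_N`, and `A_M`-orthonormality gives `Π Φ_M = Φ_N C`. Hence the two sides of the
commutation relation, restricted to the span of `Φ_M`, are `Φ_N (C Λ_M)` and `Φ_N (Λ_N C)`, and
`Φ_N` is left-cancellable because `Φ_Nᵀ A_N` is a left inverse of it.
-/

open Matrix

namespace Matrix

theorem inv_mul_mul_eq_of_mul_eq {m n R : Type*} [Fintype m] [Fintype n] [DecidableEq m]
    [CommRing R] {A W : Matrix m m R} [Invertible A] {Φ : Matrix m n R} {Λ : Matrix n n R}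
    (h : W * Φ = A * Φ * Λ) : A⁻¹ * W * Φ = Φ * Λ := by
  rw [Matrix.mul_assoc, h, Matrix.mul_assoc, inv_mul_cancel_left_of_invertible]

theorem mul_left_cancel_of_mul_eq_one {l m n R : Type*} [Fintype m] [Fintype n] [DecidableEq n]
    [Semiring R] {P : Matrix n m R} {B : Matrix m n R} (hPB : P * B = 1) {X Y : Matrix n l R} :
    B * X = B * Y ↔ X = Y := by
  refine ⟨fun h => ?_, congrArg _⟩
  calc X = P * B * X := by rw [hPB, Matrix.one_mul]
    _ = P * B * Y := by rw [Matrix.mul_assoc, h, ← Matrix.mul_assoc]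
    _ = Y := by rw [hPB, Matrix.one_mul]

theorem forall_mulVec_comm_iff {k l m R : Type*} [Fintype k] [Fintype l] [Fintype m]
    [CommSemiring R] {Q : Matrix l m R} {L : Matrix m m R} {L' : Matrix l l R}
    {Φ : Matrix m k R} :
    (∀ X, Q *ᵥ (L *ᵥ (Φ *ᵥ X)) = L' *ᵥ (Q *ᵥ (Φ *ᵥ X))) ↔ Q * (L * Φ) = L' * (Q * Φ) := by
  simp only [mulVec_mulVec, ext_iff_mulVec (A := Q * (L * Φ))]

end Matrix

theorem laplacian_commutativity_iff_isometry_constraint_general (nM nN k : ℕ)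
    (AM WM : Matrix (Fin nM) (Fin nM) ℝ) [Invertible AM]
    (AN WN : Matrix (Fin nN) (Fin nN) ℝ) [Invertible AN]
    (ΛM ΛN : Matrix (Fin k) (Fin k) ℝ)
    (ΦM : Matrix (Fin nM) (Fin k) ℝ) (ΦN : Matrix (Fin nN) (Fin k) ℝ)
    (hEigM : WM * ΦM = AM * ΦM * ΛM) (hEigN : WN * ΦN = AN * ΦN * ΛN)
    (hOrthM : ΦMᵀ * AM * ΦM = 1) (hOrthN : ΦNᵀ * AN * ΦN = 1)
    (C : Matrix (Fin k) (Fin k) ℝ)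
    (Pi : Matrix (Fin nN) (Fin nM) ℝ)
    (hPi : Pi = ΦN * C * (ΦMᵀ * AM)) :
    (∀ X : Fin k → ℝ,
        Pi *ᵥ ((AM⁻¹ * WM) *ᵥ (ΦM *ᵥ X)) = (AN⁻¹ * WN) *ᵥ (Pi *ᵥ (ΦM *ᵥ X))) ↔
      C * ΛM = ΛN * C := by
  have hPiΦ : Pi * ΦM = ΦN * C := by
    rw [hPi, Matrix.mul_assoc, Matrix.mul_assoc, hOrthM, Matrix.mul_one]
  have hLHS : Pi * (AM⁻¹ * WM * ΦM) = ΦN * (C * ΛM) := by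
    rw [inv_mul_mul_eq_of_mul_eq hEigM, ← Matrix.mul_assoc, hPiΦ, Matrix.mul_assoc]
  have hRHS : AN⁻¹ * WN * (Pi * ΦM) = ΦN * (ΛN * C) := by
    rw [hPiΦ, ← Matrix.mul_assoc, inv_mul_mul_eq_of_mul_eq hEigN, Matrix.mul_assoc]
  rw [forall_mulVec_comm_iff, hLHS, hRHS, mul_left_cancel_of_mul_eq_one hOrthN]

/-- The functional-map point map `Π = Φ_N * C * Φ_M⁺` commutes with the discrete
Laplace–Beltrami operators on the span of the source spectral basis if and only if
the functional map matrix `C` intertwines the eigenvalue matrices: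
`C * Λ_M = Λ_N * C`. -/
theorem laplacian_commutativity_iff_isometry_constraint (nM nN k : ℕ)
    (AM WM : Matrix (Fin nM) (Fin nM) ℝ) [Invertible AM]
    (AN WN : Matrix (Fin nN) (Fin nN) ℝ) [Invertible AN]
    (ΛM ΛN : Matrix (Fin k) (Fin k) ℝ) (hΛM : ΛM.IsDiag) (hΛN : ΛN.IsDiag)
    (ΦM : Matrix (Fin nM) (Fin k) ℝ) (ΦN : Matrix (Fin nN) (Fin k) ℝ)
    (hEigM : WM * ΦM = AM * ΦM * ΛM) (hEigN : WN * ΦN = AN * ΦN * ΛN)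
    (hOrthM : ΦMᵀ * AM * ΦM = 1) (hOrthN : ΦNᵀ * AN * ΦN = 1)
    (C : Matrix (Fin k) (Fin k) ℝ)
    (Pi : Matrix (Fin nN) (Fin nM) ℝ)
    (hPi : Pi = ΦN * C * (ΦMᵀ * AM)) :
    (∀ X : Fin k → ℝ,
        Pi *ᵥ ((AM⁻¹ * WM) *ᵥ (ΦM *ᵥ X)) = (AN⁻¹ * WN) *ᵥ (Pi *ᵥ (ΦM *ᵥ X))) ↔
      C * ΛM = ΛN * C :=
  laplacian_commutativity_iff_isometry_constraint_general nM nN k AM WM AN WN ΛM ΛN ΦM ΦN hEigM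
    hEigN hOrthM hOrthN C Pi hPi
end
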